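/- The q-binomial theorem: for complex q, z with |q| < 1 and |z| < 1, and any complex a, the series ∑_{n=0}^∞ ((a;q)_n / (q;q)_n) z^n converges and equals (az;q)_∞ / (z;q)_∞. -/

import Mathlib

/-- Finite q-Pochhammer symbol: (a;q)_n = ∏_{k=0}^{n-1} (1 - a q^k). -/
noncomputable def qp (a q : ℂ) (n : ℕ) : ℂ := ∏ k ∈ Finset.range n, (1 - a * q ^ k)

/-- Infinite q-Pochhammer symbol: (a;q)_∞ = ∏_{k=0}^∞ (1 - a q^k). -/
noncomputable def qpInf (a q : ℂ) : ℂ := ∏' k : ℕ, (1 - a * q ^ k)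

/-!
Write `F(w) = ∑ (a;q)_n / (q;q)_n w^n`. Comparing coefficients gives the functional equation
`(1 - w) F(w) = (1 - a w) F(q w)`, and iterating it `N` times yields
`F(z) (z;q)_N = (az;q)_N F(q^N z)`. As `N → ∞`, `q^N z → 0`, so `F(q^N z) → F(0) = 1`, while the
finite products converge to the infinite ones; `(z;q)_∞ ≠ 0` because `|z| < 1`.
-/

open Filter Finset Topology

section Series

variable {E : Type*} [NormedAddCommGroup E] [CompleteSpace E]

theorem summable_of_norm_le_ratio_mul_of_tendsto {f : ℕ → E} {ρ : ℕ → ℝ} {l : ℝ} (hl : l < 1)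
    (hρ : Tendsto ρ atTop (𝓝 l)) (hf : ∀ n, ‖f (n + 1)‖ ≤ ρ n * ‖f n‖) : Summable f := by
  have hlr : l < (l + 1) / 2 := by linarith
  refine summable_of_ratio_norm_eventually_le (r := (l + 1) / 2) (by linarith) ?_
  filter_upwards [hρ.eventually (eventually_le_nhds hlr)] with n hn
  exact (hf n).trans (mul_le_mul_of_nonneg_right hn (norm_nonneg _))

variable {𝕜 α : Type*} [NormedField 𝕜] [CompleteSpace 𝕜]

theorem tendsto_tsum_mul_pow_of_tendsto_zero {c : ℕ → 𝕜} {r : ℝ}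
    (hc : Summable fun n ↦ ‖c n‖ * r ^ n) {l : Filter α} {w : α → 𝕜}
    (hw : Tendsto w l (𝓝 0)) (hwr : ∀ᶠ x in l, ‖w x‖ ≤ r) :
    Tendsto (fun x ↦ ∑' n, c n * w x ^ n) l (𝓝 (c 0)) := by
  have hlim : ∑' n, c n * (0 : 𝕜) ^ n = c 0 := by
    rw [tsum_eq_single 0 fun n hn ↦ by simp [hn]]
    simp
  rw [← hlim]
  refine tendsto_tsum_of_dominated_convergence hc (fun n ↦ (hw.pow n).const_mul (c n)) ?_
  filter_upwards [hwr] with x hx n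
  rw [norm_mul, norm_pow]
  gcongr

end Series

section Pochhammer

variable {q : ℂ}

theorem norm_pow_mul_le (hq : ‖q‖ ≤ 1) (n : ℕ) (z : ℂ) : ‖q ^ n * z‖ ≤ ‖z‖ := by
  rw [norm_mul, norm_pow]
  exact mul_le_of_le_one_left (norm_nonneg z) (pow_le_one₀ (norm_nonneg q) hq)

theorem one_sub_mul_pow_ne_zero {a : ℂ} (ha : ‖a‖ < 1) (hq : ‖q‖ ≤ 1) (k : ℕ) :
    1 - a * q ^ k ≠ 0 := by
  have : ‖a * q ^ k‖ < 1 := by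
    rw [mul_comm]
    exact (norm_pow_mul_le hq k a).trans_lt ha
  intro h
  rw [← sub_eq_zero.mp h, norm_one] at this
  exact this.false

theorem qp_succ (a : ℂ) (n : ℕ) : qp a q (n + 1) = qp a q n * (1 - a * q ^ n) :=
  prod_range_succ _ _

theorem summable_norm_mul_pow (hq : ‖q‖ < 1) (a : ℂ) : Summable fun k : ℕ ↦ ‖a * q ^ k‖ := by
  simpa only [norm_mul, norm_pow] using
    (summable_geometric_of_lt_one (norm_nonneg q) hq).mul_left ‖a‖

theorem hasProd_qpInf (hq : ‖q‖ < 1) (a : ℂ) :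
    HasProd (fun k : ℕ ↦ 1 - a * q ^ k) (qpInf a q) := by
  simp only [sub_eq_add_neg, qpInf]
  exact (multipliable_one_add_of_summable (by simpa using summable_norm_mul_pow hq a)).hasProd

theorem tendsto_qp_qpInf (hq : ‖q‖ < 1) (a : ℂ) : Tendsto (qp a q) atTop (𝓝 (qpInf a q)) :=
  (hasProd_qpInf hq a).tendsto_prod_nat

theorem qpInf_ne_zero {a : ℂ} (ha : ‖a‖ < 1) (hq : ‖q‖ < 1) : qpInf a q ≠ 0 := by
  simp only [qpInf, sub_eq_add_neg]
  exact tprod_one_add_ne_zero_of_summable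
    (fun k ↦ by simpa [← sub_eq_add_neg] using one_sub_mul_pow_ne_zero ha hq.le k)
    (by simpa using summable_norm_mul_pow hq a)

end Pochhammer

noncomputable def qBinomialCoeff (a q : ℂ) (n : ℕ) : ℂ := qp a q n / qp q q n

noncomputable def qBinomialSeries (a q w : ℂ) : ℂ := ∑' n, qBinomialCoeff a q n * w ^ n

namespace qBinomialCoeff

variable {q : ℂ}

theorem zero (a q : ℂ) : qBinomialCoeff a q 0 = 1 := by
  simp [qBinomialCoeff, qp]

theorem succ (a : ℂ) (n : ℕ) :
    qBinomialCoeff a q (n + 1) = qBinomialCoeff a q n * ((1 - a * q ^ n) / (1 - q * q ^ n)) := by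
  simp only [qBinomialCoeff, qp_succ, mul_div_mul_comm]

theorem succ_mul (hq : ‖q‖ < 1) (a : ℂ) (n : ℕ) :
    qBinomialCoeff a q (n + 1) * (1 - q * q ^ n) = qBinomialCoeff a q n * (1 - a * q ^ n) := by
  rw [succ, mul_assoc, div_mul_cancel₀ _ (one_sub_mul_pow_ne_zero hq hq.le n)]

theorem summable_norm_mul_pow (hq : ‖q‖ < 1) (a : ℂ) {w : ℂ} (hw : ‖w‖ < 1) :
    Summable fun n ↦ ‖qBinomialCoeff a q n * w ^ n‖ := by
  have hq0 : Tendsto (fun n : ℕ ↦ q ^ n) atTop (𝓝 0) :=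
    tendsto_pow_atTop_nhds_zero_of_norm_lt_one hq
  have hratio : Tendsto (fun n : ℕ ↦ ‖(1 - a * q ^ n) / (1 - q * q ^ n) * w‖) atTop
      (𝓝 ‖(1 - a * 0) / (1 - q * 0) * w‖) :=
    (((tendsto_const_nhds.sub (hq0.const_mul a)).div
      (tendsto_const_nhds.sub (hq0.const_mul q)) (by simp)).mul_const w).norm
  simp only [mul_zero, sub_zero, div_one, one_mul] at hratio
  refine summable_of_norm_le_ratio_mul_of_tendsto hw hratio fun n ↦ le_of_eq ?_
  simp only [norm_norm, succ, pow_succ, ← norm_mul]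
  ring_nf

end qBinomialCoeff

namespace qBinomialSeries

variable {q : ℂ}

theorem hasSum (hq : ‖q‖ < 1) (a : ℂ) {w : ℂ} (hw : ‖w‖ < 1) :
    HasSum (fun n ↦ qBinomialCoeff a q n * w ^ n) (qBinomialSeries a q w) :=
  (qBinomialCoeff.summable_norm_mul_pow hq a hw).of_norm.hasSum

theorem one_sub_mul (hq : ‖q‖ < 1) (a : ℂ) {w : ℂ} (hw : ‖w‖ < 1) :
    (1 - w) * qBinomialSeries a q w = (1 - a * w) * qBinomialSeries a q (q * w) := by
  have hqw : ‖q * w‖ < 1 := by simpa using (norm_pow_mul_le hq.le 1 w).trans_lt hw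
  have hS := hasSum hq a hw
  have hT := hasSum hq a hqw
  -- after a shift, the terms of `F(w) - F(qw)` are those of `w (F(w) - a F(qw))`
  have hshift := (hasSum_nat_add_iff' 1).mpr (hS.sub hT)
  have hrhs := (hS.sub (hT.mul_left a)).mul_left w
  simp only [sum_range_one, pow_zero, mul_one, sub_self, sub_zero] at hshift
  have hcoeff : ∀ n : ℕ,
      qBinomialCoeff a q (n + 1) * w ^ (n + 1) - qBinomialCoeff a q (n + 1) * (q * w) ^ (n + 1) =
        w * (qBinomialCoeff a q n * w ^ n - a * (qBinomialCoeff a q n * (q * w) ^ n)) := fun n ↦ by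
    linear_combination w ^ (n + 1) * qBinomialCoeff.succ_mul hq a n
  simp only [hcoeff] at hshift
  linear_combination hshift.unique hrhs

theorem mul_qp (hq : ‖q‖ < 1) (a : ℂ) {z : ℂ} (hz : ‖z‖ < 1) (N : ℕ) :
    qBinomialSeries a q z * qp z q N = qp (a * z) q N * qBinomialSeries a q (q ^ N * z) := by
  induction N with
  | zero => simp [qp]
  | succ n ih =>
    have hfe := one_sub_mul hq a ((norm_pow_mul_le hq.le n z).trans_lt hz)
    rw [qp_succ, qp_succ, ← mul_assoc, ih, pow_succ', mul_assoc q]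
    linear_combination qp (a * z) q n * hfe

theorem tendsto_one (hq : ‖q‖ < 1) (a : ℂ) {z : ℂ} (hz : ‖z‖ < 1) :
    Tendsto (fun N : ℕ ↦ qBinomialSeries a q (q ^ N * z)) atTop (𝓝 1) := by
  rw [← qBinomialCoeff.zero a q]
  refine tendsto_tsum_mul_pow_of_tendsto_zero (r := ‖z‖)
    (by simpa [norm_mul, norm_pow] using qBinomialCoeff.summable_norm_mul_pow hq a hz) ?_ ?_
  · simpa using (tendsto_pow_atTop_nhds_zero_of_norm_lt_one hq).mul_const z
  · exact Eventually.of_forall fun N ↦ norm_pow_mul_le hq.le N z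

end qBinomialSeries

/-- The q-binomial theorem. -/
theorem q_binomial_theorem (q z a : ℂ) (hq : ‖q‖ < 1) (hz : ‖z‖ < 1) :
    HasSum (fun n : ℕ => qp a q n / qp q q n * z ^ n) (qpInf (a * z) q / qpInf z q) := by
  suffices h : qBinomialSeries a q z = qpInf (a * z) q / qpInf z q by
    rw [← h]
    exact qBinomialSeries.hasSum hq a hz
  rw [eq_div_iff (qpInf_ne_zero hz hq), ← mul_one (qpInf (a * z) q)]
  have hlhs := (tendsto_qp_qpInf hq z).const_mul (qBinomialSeries a q z)
  have hrhs := (tendsto_qp_qpInf hq (a * z)).mul (qBinomialSeries.tendsto_one hq a hz)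
  exact tendsto_nhds_unique (hlhs.congr (qBinomialSeries.mul_qp hq a hz)) hrhs
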